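/- Let ζ and ζ' be the optimal values of the continuous relaxations (in which every binary constraint z_{ij} ∈ {0,1} is replaced by 0 ≤ z_{ij} ≤ 1) of formulation (SPP-F1) and of formulation (SPP-F2), respectively. Then ζ ≤ ζ'. -/

import Mathlib

/-!
Forgetting `ρ`, `Φ`, `Ψ` maps every feasible point of the relaxed (SPP-F2) to a feasible
point of the relaxed (SPP-F1) with the same objective value: summing `Φ` and `Ψ` recovers
`λ`, and the (SPP-F1) distance bounds follow from the (SPP-F2) ones by the triangle
inequality for the ℓ_p norms. So `ζ` is an infimum over a larger set than `ζ'`. Because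
`sInf ∅ = 0` for real sets, this needs two more facts: the (SPP-F1) values are nonnegative,
and (SPP-F2) is feasible as soon as (SPP-F1) is, which is seen by splitting the flow through
each inner vertex proportionally.
-/

open scoped BigOperators ENNReal

attribute [local instance] Classical.propDecidable

/-- The ℓ_p norm on ℝ^d for an extended-real exponent `p` (with `‖x‖_∞ = max_k |x_k|`). -/
noncomputable def lpnorm {d : ℕ} (p : ℝ≥0∞) (x : Fin d → ℝ) : ℝ :=
  if p = ∞ then ⨆ k, |x k| else (∑ k, |x k| ^ p.toReal) ^ (1 / p.toReal)

/-- Out-neighbours of `i` in the adjacency relation `Adj`. -/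
noncomputable def outN {m : ℕ} (Adj : Fin m → Fin m → Prop) (i : Fin m) : Finset (Fin m) :=
  Finset.univ.filter (fun j => Adj i j)

/-- In-neighbours of `i` in the adjacency relation `Adj`. -/
noncomputable def inN {m : ℕ} (Adj : Fin m → Fin m → Prop) (i : Fin m) : Finset (Fin m) :=
  Finset.univ.filter (fun h => Adj h i)

section LpNorm

variable {d : ℕ} {p : ℝ≥0∞}

lemma lpnorm_eq_norm [Fact (1 ≤ p)] (x : Fin d → ℝ) :
    lpnorm p x = ‖(WithLp.toLp p x : PiLp p (fun _ : Fin d => ℝ))‖ := by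
  rcases eq_or_ne p ∞ with rfl | hp_top
  · simp [lpnorm, PiLp.norm_eq_ciSup, Real.norm_eq_abs]
  · have hp_pos : 0 < p.toReal :=
      ENNReal.toReal_pos (zero_lt_one.trans_le Fact.out).ne' hp_top
    simp [lpnorm, hp_top, PiLp.norm_eq_sum hp_pos, Real.norm_eq_abs]

lemma lpnorm_nonneg (hp : 1 ≤ p) (x : Fin d → ℝ) : 0 ≤ lpnorm p x := by
  have : Fact (1 ≤ p) := ⟨hp⟩
  rw [lpnorm_eq_norm]
  exact norm_nonneg _

lemma lpnorm_sum_le (hp : 1 ≤ p) {ι : Type*} (S : Finset ι) (f : ι → Fin d → ℝ) :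
    lpnorm p (∑ i ∈ S, f i) ≤ ∑ i ∈ S, lpnorm p (f i) := by
  have : Fact (1 ≤ p) := ⟨hp⟩
  simp only [lpnorm_eq_norm, WithLp.toLp_sum]
  exact norm_sum_le _ _

lemma lpnorm_sum_sub_le (hp : 1 ≤ p) {ι : Type*} (S : Finset ι) (a : ι → Fin d → ℝ)
    {w : ι → ℝ} (hw : ∑ i ∈ S, w i = 1) (x : Fin d → ℝ) :
    lpnorm p ((∑ i ∈ S, a i) - x) ≤ ∑ i ∈ S, lpnorm p (a i - w i • x) := by
  have hsplit : (∑ i ∈ S, a i) - x = ∑ i ∈ S, (a i - w i • x) := by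
    rw [Finset.sum_sub_distrib, ← Finset.sum_smul, hw, one_smul]
  exact hsplit ▸ lpnorm_sum_le hp S _

lemma lpnorm_sub_sum_le (hp : 1 ≤ p) {ι : Type*} (S : Finset ι) (a : ι → Fin d → ℝ)
    {w : ι → ℝ} (hw : ∑ i ∈ S, w i = 1) (x : Fin d → ℝ) :
    lpnorm p (x - ∑ i ∈ S, a i) ≤ ∑ i ∈ S, lpnorm p (w i • x - a i) := by
  have hsplit : x - ∑ i ∈ S, a i = ∑ i ∈ S, (w i • x - a i) := by
    rw [Finset.sum_sub_distrib, ← Finset.sum_smul, hw, one_smul]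
  exact hsplit ▸ lpnorm_sum_le hp S _

lemma lpnorm_sum_sub_sum_le (hp : 1 ≤ p) {ι κ : Type*} (H : Finset ι) (J : Finset κ)
    {a : κ → Fin d → ℝ} {b : ι → Fin d → ℝ} (c e : ι → κ → Fin d → ℝ)
    (ha : ∀ j ∈ J, a j = ∑ h ∈ H, c h j) (hb : ∀ h ∈ H, b h = ∑ j ∈ J, e h j) :
    lpnorm p (∑ j ∈ J, a j - ∑ h ∈ H, b h) ≤ ∑ h ∈ H, ∑ j ∈ J, lpnorm p (c h j - e h j) := by
  have hsplit : ∑ j ∈ J, a j - ∑ h ∈ H, b h = ∑ h ∈ H, ∑ j ∈ J, (c h j - e h j) := by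
    simp only [Finset.sum_congr rfl ha, Finset.sum_congr rfl hb, Finset.sum_sub_distrib]
    rw [Finset.sum_comm]
  calc lpnorm p (∑ j ∈ J, a j - ∑ h ∈ H, b h)
      ≤ ∑ h ∈ H, lpnorm p (∑ j ∈ J, (c h j - e h j)) := hsplit ▸ lpnorm_sum_le hp H _
    _ ≤ ∑ h ∈ H, ∑ j ∈ J, lpnorm p (c h j - e h j) :=
      Finset.sum_le_sum fun h _ => lpnorm_sum_le hp J _

end LpNorm

lemma Finset.sum_smul_eq_sum_sum_smul_of_sum_eq {R M ι κ : Type*} [Semiring R]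
    [AddCommMonoid M] [Module R M] {E : Finset κ} {H : Finset ι} {μ : κ → R}
    {ν : ι → κ → R} (v : κ → M) (hν : ∀ e ∈ E, ∑ h ∈ H, ν h e = μ e) :
    ∑ e ∈ E, μ e • v e = ∑ h ∈ H, ∑ e ∈ E, ν h e • v e := by
  rw [Finset.sum_comm]
  exact Finset.sum_congr rfl fun e he => by rw [← Finset.sum_smul, hν e he]

lemma Finset.sum_mul_div_eq_of_sum_eq {ι : Type*} {S : Finset ι} {b : ι → ℝ} {σ x : ℝ}
    (hb : ∑ i ∈ S, b i = σ) (hx : σ = 0 → x = 0) : ∑ i ∈ S, x * b i / σ = x := by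
  rw [← Finset.sum_div, ← Finset.mul_sum, hb]
  rcases eq_or_ne σ 0 with hσ | hσ
  · simp [hσ, hx hσ]
  · exact mul_div_cancel_right₀ x hσ

lemma Real.sInf_le_sInf_of_subset {A B : Set ℝ} (hBA : B ⊆ A) (hA : BddBelow A)
    (hAB : A.Nonempty → B.Nonempty) : sInf A ≤ sInf B := by
  rcases B.eq_empty_or_nonempty with rfl | hB
  · rcases A.eq_empty_or_nonempty with rfl | hA'
    · rfl
    · simpa using hAB hA'
  · exact csInf_le_csInf hA hB hBA

lemma mem_outN {m : ℕ} {Adj : Fin m → Fin m → Prop} {i j : Fin m} :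
    j ∈ outN Adj i ↔ Adj i j := by simp [outN]

lemma mem_inN {m : ℕ} {Adj : Fin m → Fin m → Prop} {i h : Fin m} :
    h ∈ inN Adj i ↔ Adj h i := by simp [inN]

section Relaxations

variable {d m : ℕ} (p : Fin m → ℝ≥0∞) (ω : Fin m → ℝ)
  (ExtF : Fin m → Fin m → Finset (Fin d → ℝ)) (Adj : Fin m → Fin m → Prop) (s t : Fin m) (xs xt : Fin d → ℝ)

/-- Objective values of the relaxation of (SPP-F1); `ζ` is its infimum. -/
def sppF1Values : Set ℝ :=
  {r : ℝ | ∃ (dv : Fin m → ℝ) (z : Fin m → Fin m → ℝ)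
        (lam : Fin m → Fin m → (Fin d → ℝ) → ℝ),
        (∀ i, 0 ≤ dv i) ∧
        (∀ i j, Adj i j → 0 ≤ z i j ∧ z i j ≤ 1) ∧
        (∀ i j, Adj i j → ∀ e ∈ ExtF i j, 0 ≤ lam i j e) ∧
        ((∑ j ∈ outN Adj s, z s j) - (∑ h ∈ inN Adj s, z h s) = 1) ∧
        (∀ i, i ≠ s → i ≠ t →
          (∑ j ∈ outN Adj i, z i j) - (∑ h ∈ inN Adj i, z h i) = 0) ∧
        ((∑ j ∈ outN Adj t, z t j) - (∑ h ∈ inN Adj t, z h t) = -1) ∧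
        (∀ i, (∑ h ∈ inN Adj i, z h i) ≤ 1) ∧
        (∀ i, (∑ j ∈ outN Adj i, z i j) ≤ 1) ∧
        (lpnorm (p s) ((∑ j ∈ outN Adj s, ∑ e ∈ ExtF s j, lam s j e • e) - xs) ≤ dv s) ∧
        (∀ i, i ≠ s → i ≠ t →
          lpnorm (p i) ((∑ j ∈ outN Adj i, ∑ e ∈ ExtF i j, lam i j e • e)
            - (∑ h ∈ inN Adj i, ∑ e ∈ ExtF h i, lam h i e • e)) ≤ dv i) ∧
        (lpnorm (p t) (xt - (∑ h ∈ inN Adj t, ∑ e ∈ ExtF h t, lam h t e • e)) ≤ dv t) ∧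
        (∀ i j, Adj i j → (∑ e ∈ ExtF i j, lam i j e) = z i j) ∧
        r = ∑ i, ω i * dv i}

/-- Objective values of the relaxation of (SPP-F2); `ζ'` is its infimum. -/
def sppF2Values : Set ℝ :=
  {r : ℝ | ∃ (dv : Fin m → ℝ) (z : Fin m → Fin m → ℝ)
        (lam : Fin m → Fin m → (Fin d → ℝ) → ℝ)
        (ρ : Fin m → Fin m → Fin m → ℝ)
        (Φ : Fin m → Fin m → Fin m → (Fin d → ℝ) → ℝ)
        (Ψ : Fin m → Fin m → Fin m → (Fin d → ℝ) → ℝ),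
        (∀ i, 0 ≤ dv i) ∧
        (∀ i j, Adj i j → 0 ≤ z i j ∧ z i j ≤ 1) ∧
        (∀ i j, Adj i j → ∀ e ∈ ExtF i j, 0 ≤ lam i j e) ∧
        (∀ i, i ≠ s → i ≠ t → ∀ h j, Adj h i → Adj i j → 0 ≤ ρ h i j) ∧
        (∀ i, i ≠ s → i ≠ t → ∀ h j, Adj h i → Adj i j →
          ∀ e ∈ ExtF h i, 0 ≤ Φ h i j e) ∧
        (∀ i, i ≠ s → i ≠ t → ∀ h j, Adj h i → Adj i j →
          ∀ e ∈ ExtF i j, 0 ≤ Ψ h i j e) ∧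
        ((∑ j ∈ outN Adj s, z s j) - (∑ h ∈ inN Adj s, z h s) = 1) ∧
        (∀ i, i ≠ s → i ≠ t →
          (∑ j ∈ outN Adj i, z i j) - (∑ h ∈ inN Adj i, z h i) = 0) ∧
        ((∑ j ∈ outN Adj t, z t j) - (∑ h ∈ inN Adj t, z h t) = -1) ∧
        (∀ i, (∑ h ∈ inN Adj i, z h i) ≤ 1) ∧
        (∀ i, (∑ j ∈ outN Adj i, z i j) ≤ 1) ∧
        ((∑ j ∈ outN Adj s,
            lpnorm (p s) ((∑ e ∈ ExtF s j, lam s j e • e) - z s j • xs)) ≤ dv s) ∧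
        (∀ i, i ≠ s → i ≠ t →
          (∑ h ∈ inN Adj i, ∑ j ∈ outN Adj i,
            lpnorm (p i) ((∑ e ∈ ExtF i j, Ψ h i j e • e)
              - (∑ e ∈ ExtF h i, Φ h i j e • e))) ≤ dv i) ∧
        ((∑ h ∈ inN Adj t,
            lpnorm (p t) (z h t • xt - (∑ e ∈ ExtF h t, lam h t e • e))) ≤ dv t) ∧
        (∀ i j, Adj i j → (∑ e ∈ ExtF i j, lam i j e) = z i j) ∧
        (∀ i, i ≠ s → i ≠ t → ∀ h, Adj h i →
          (∑ j ∈ outN Adj i, ρ h i j) = z h i) ∧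
        (∀ i, i ≠ s → i ≠ t → ∀ j, Adj i j →
          (∑ h ∈ inN Adj i, ρ h i j) = z i j) ∧
        (∀ i, i ≠ s → i ≠ t → ∀ h j, Adj h i → Adj i j →
          (∑ e ∈ ExtF h i, Φ h i j e) = ρ h i j) ∧
        (∀ i, i ≠ s → i ≠ t → ∀ h, Adj h i → ∀ e ∈ ExtF h i,
          (∑ j ∈ outN Adj i, Φ h i j e) = lam h i e) ∧
        (∀ i, i ≠ s → i ≠ t → ∀ h j, Adj h i → Adj i j →
          (∑ e ∈ ExtF i j, Ψ h i j e) = ρ h i j) ∧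
        (∀ i, i ≠ s → i ≠ t → ∀ j, Adj i j → ∀ e ∈ ExtF i j,
          (∑ h ∈ inN Adj i, Ψ h i j e) = lam i j e) ∧
        r = ∑ i, ω i * dv i}

variable {p ω ExtF Adj s t xs xt}

lemma sppF1Values_nonneg (hω : ∀ i, 0 ≤ ω i) :
    ∀ r ∈ sppF1Values p ω ExtF Adj s t xs xt, 0 ≤ r := by
  rintro r ⟨dv, -, -, hdv, -, -, -, -, -, -, -, -, -, -, -, rfl⟩
  exact Finset.sum_nonneg fun i _ => mul_nonneg (hω i) (hdv i)

lemma sppF2Values_subset_sppF1Values (hp : ∀ i, 1 ≤ p i) :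
    sppF2Values p ω ExtF Adj s t xs xt ⊆ sppF1Values p ω ExtF Adj s t xs xt := by
  rintro r ⟨dv, z, lam, -, Φ, Ψ, hdv, hz, hlam, -, -, -, hflow_s, hflow, hflow_t, hin, hout,
    hdist_s, hdist, hdist_t, hlam_sum, -, -, -, hΦ, -, hΨ, rfl⟩
  have hout_s : ∑ j ∈ outN Adj s, z s j = 1 := by
    have : 0 ≤ ∑ h ∈ inN Adj s, z h s :=
      Finset.sum_nonneg fun h hh => (hz h s (mem_inN.mp hh)).1
    linarith [hout s]
  have hin_t : ∑ h ∈ inN Adj t, z h t = 1 := by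
    have : 0 ≤ ∑ j ∈ outN Adj t, z t j :=
      Finset.sum_nonneg fun j hj => (hz t j (mem_outN.mp hj)).1
    linarith [hin t]
  refine ⟨dv, z, lam, hdv, hz, hlam, hflow_s, hflow, hflow_t, hin, hout,
    (lpnorm_sum_sub_le (hp s) _ _ hout_s xs).trans hdist_s, fun i his hit => ?_,
    (lpnorm_sub_sum_le (hp t) _ _ hin_t xt).trans hdist_t, hlam_sum, rfl⟩
  refine (lpnorm_sum_sub_sum_le (hp i) _ _ _ _ (fun j hj => ?_) (fun h hh => ?_)).trans
    (hdist i his hit)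
  · exact Finset.sum_smul_eq_sum_sum_smul_of_sum_eq (fun e => e)
      (hΨ i his hit j (mem_outN.mp hj))
  · exact Finset.sum_smul_eq_sum_sum_smul_of_sum_eq (fun e => e)
      (hΦ i his hit h (mem_inN.mp hh))

/-- At an inner vertex `i` with inflow `σ i`, the flow `z h i` entering from `h` is split
among the outgoing arcs proportionally to `z i j`, and likewise for `λ`. -/
lemma sppF2Values_nonempty (hp : ∀ i, 1 ≤ p i) (hst : s ≠ t)
    (hF1 : (sppF1Values p ω ExtF Adj s t xs xt).Nonempty) :
    (sppF2Values p ω ExtF Adj s t xs xt).Nonempty := by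
  obtain ⟨-, dv, z, lam, -, hz, hlam, hflow_s, hflow, hflow_t, hin, hout, -, -, -,
    hlam_sum, -⟩ := hF1
  set σ : Fin m → ℝ := fun i => ∑ h ∈ inN Adj i, z h i
  have hσ_nonneg (i : Fin m) : 0 ≤ σ i :=
    Finset.sum_nonneg fun h hh => (hz h i (mem_inN.mp hh)).1
  have hcons (i : Fin m) (his : i ≠ s) (hit : i ≠ t) : ∑ j ∈ outN Adj i, z i j = σ i := by
    linarith [hflow i his hit]
  have hz_in_zero {h i : Fin m} (hhi : Adj h i) (h0 : σ i = 0) : z h i = 0 :=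
    (Finset.sum_eq_zero_iff_of_nonneg fun h' hh' => (hz h' i (mem_inN.mp hh')).1).1 h0 h
      (mem_inN.mpr hhi)
  have hz_out_zero {i j : Fin m} (his : i ≠ s) (hit : i ≠ t) (hij : Adj i j) (h0 : σ i = 0) :
      z i j = 0 :=
    (Finset.sum_eq_zero_iff_of_nonneg fun j' hj' => (hz i j' (mem_outN.mp hj')).1).1
      ((hcons i his hit).trans h0) j (mem_outN.mpr hij)
  have hlam_zero {i j : Fin m} (hij : Adj i j) (h0 : z i j = 0) {e} (he : e ∈ ExtF i j) :
      lam i j e = 0 :=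
    (Finset.sum_eq_zero_iff_of_nonneg (hlam i j hij)).1 ((hlam_sum i j hij).trans h0) e he
  let dv' : Fin m → ℝ := fun i =>
    if i = s then
      ∑ j ∈ outN Adj s, lpnorm (p s) ((∑ e ∈ ExtF s j, lam s j e • e) - z s j • xs)
    else if i = t then
      ∑ h ∈ inN Adj t, lpnorm (p t) (z h t • xt - ∑ e ∈ ExtF h t, lam h t e • e)
    else
      ∑ h ∈ inN Adj i, ∑ j ∈ outN Adj i,
        lpnorm (p i) ((∑ e ∈ ExtF i j, (lam i j e * z h i / σ i) • e)
          - ∑ e ∈ ExtF h i, (lam h i e * z i j / σ i) • e)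
  refine ⟨_, dv', z, lam, fun h i j => z h i * z i j / σ i,
    fun h i j e => lam h i e * z i j / σ i, fun h i j e => lam i j e * z h i / σ i,
    fun i => ?_, hz, hlam, ?_, ?_, ?_, hflow_s, hflow, hflow_t, hin, hout, ?_, ?_, ?_,
    hlam_sum, ?_, ?_, ?_, ?_, ?_, ?_, rfl⟩
  · dsimp only [dv']
    split_ifs
    exacts [Finset.sum_nonneg fun _ _ => lpnorm_nonneg (hp s) _,
      Finset.sum_nonneg fun _ _ => lpnorm_nonneg (hp t) _,
      Finset.sum_nonneg fun _ _ => Finset.sum_nonneg fun _ _ => lpnorm_nonneg (hp i) _]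
  · exact fun i _ _ h j hhi hij =>
      div_nonneg (mul_nonneg (hz h i hhi).1 (hz i j hij).1) (hσ_nonneg i)
  · exact fun i _ _ h j hhi hij e he =>
      div_nonneg (mul_nonneg (hlam h i hhi e he) (hz i j hij).1) (hσ_nonneg i)
  · exact fun i _ _ h j hhi hij e he =>
      div_nonneg (mul_nonneg (hlam i j hij e he) (hz h i hhi).1) (hσ_nonneg i)
  · simp [dv']
  · intro i his hit
    simp [dv', his, hit]
  · simp [dv', hst.symm]
  · exact fun i his hit h hhi =>
      Finset.sum_mul_div_eq_of_sum_eq (hcons i his hit) (hz_in_zero hhi)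
  · intro i his hit j hij
    simp_rw [mul_comm (z _ i)]
    exact Finset.sum_mul_div_eq_of_sum_eq rfl (hz_out_zero his hit hij)
  · intro i _ _ h j hhi _
    rw [← Finset.sum_div, ← Finset.sum_mul, hlam_sum h i hhi]
  · exact fun i his hit h hhi e he => Finset.sum_mul_div_eq_of_sum_eq (hcons i his hit)
      fun h0 => hlam_zero hhi (hz_in_zero hhi h0) he
  · intro i _ _ h j _ hij
    rw [← Finset.sum_div, ← Finset.sum_mul, hlam_sum i j hij, mul_comm]
  · exact fun i his hit j hij e he => Finset.sum_mul_div_eq_of_sum_eq rfl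
      fun h0 => hlam_zero hij (hz_out_zero his hit hij h0) he

end Relaxations

theorem stmt_12_general {d m : ℕ}
    (p : Fin m → ℝ≥0∞) (hp : ∀ i, 1 ≤ p i)
    (ω : Fin m → ℝ) (hω : ∀ i, 0 < ω i)
    (ExtF : Fin m → Fin m → Finset (Fin d → ℝ))
    (Adj : Fin m → Fin m → Prop)
    (s t : Fin m) (hst : s ≠ t)
    (xs xt : Fin d → ℝ) :
    sInf {r : ℝ | ∃ (dv : Fin m → ℝ) (z : Fin m → Fin m → ℝ)
        (lam : Fin m → Fin m → (Fin d → ℝ) → ℝ),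
        (∀ i, 0 ≤ dv i) ∧
        (∀ i j, Adj i j → 0 ≤ z i j ∧ z i j ≤ 1) ∧
        (∀ i j, Adj i j → ∀ e ∈ ExtF i j, 0 ≤ lam i j e) ∧
        ((∑ j ∈ outN Adj s, z s j) - (∑ h ∈ inN Adj s, z h s) = 1) ∧
        (∀ i, i ≠ s → i ≠ t →
          (∑ j ∈ outN Adj i, z i j) - (∑ h ∈ inN Adj i, z h i) = 0) ∧
        ((∑ j ∈ outN Adj t, z t j) - (∑ h ∈ inN Adj t, z h t) = -1) ∧
        (∀ i, (∑ h ∈ inN Adj i, z h i) ≤ 1) ∧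
        (∀ i, (∑ j ∈ outN Adj i, z i j) ≤ 1) ∧
        (lpnorm (p s) ((∑ j ∈ outN Adj s, ∑ e ∈ ExtF s j, lam s j e • e) - xs) ≤ dv s) ∧
        (∀ i, i ≠ s → i ≠ t →
          lpnorm (p i) ((∑ j ∈ outN Adj i, ∑ e ∈ ExtF i j, lam i j e • e)
            - (∑ h ∈ inN Adj i, ∑ e ∈ ExtF h i, lam h i e • e)) ≤ dv i) ∧
        (lpnorm (p t) (xt - (∑ h ∈ inN Adj t, ∑ e ∈ ExtF h t, lam h t e • e)) ≤ dv t) ∧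
        (∀ i j, Adj i j → (∑ e ∈ ExtF i j, lam i j e) = z i j) ∧
        r = ∑ i, ω i * dv i}
    ≤ sInf {r : ℝ | ∃ (dv : Fin m → ℝ) (z : Fin m → Fin m → ℝ)
        (lam : Fin m → Fin m → (Fin d → ℝ) → ℝ)
        (ρ : Fin m → Fin m → Fin m → ℝ)
        (Φ : Fin m → Fin m → Fin m → (Fin d → ℝ) → ℝ)
        (Ψ : Fin m → Fin m → Fin m → (Fin d → ℝ) → ℝ),
        (∀ i, 0 ≤ dv i) ∧
        (∀ i j, Adj i j → 0 ≤ z i j ∧ z i j ≤ 1) ∧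
        (∀ i j, Adj i j → ∀ e ∈ ExtF i j, 0 ≤ lam i j e) ∧
        (∀ i, i ≠ s → i ≠ t → ∀ h j, Adj h i → Adj i j → 0 ≤ ρ h i j) ∧
        (∀ i, i ≠ s → i ≠ t → ∀ h j, Adj h i → Adj i j →
          ∀ e ∈ ExtF h i, 0 ≤ Φ h i j e) ∧
        (∀ i, i ≠ s → i ≠ t → ∀ h j, Adj h i → Adj i j →
          ∀ e ∈ ExtF i j, 0 ≤ Ψ h i j e) ∧
        ((∑ j ∈ outN Adj s, z s j) - (∑ h ∈ inN Adj s, z h s) = 1) ∧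
        (∀ i, i ≠ s → i ≠ t →
          (∑ j ∈ outN Adj i, z i j) - (∑ h ∈ inN Adj i, z h i) = 0) ∧
        ((∑ j ∈ outN Adj t, z t j) - (∑ h ∈ inN Adj t, z h t) = -1) ∧
        (∀ i, (∑ h ∈ inN Adj i, z h i) ≤ 1) ∧
        (∀ i, (∑ j ∈ outN Adj i, z i j) ≤ 1) ∧
        ((∑ j ∈ outN Adj s,
            lpnorm (p s) ((∑ e ∈ ExtF s j, lam s j e • e) - z s j • xs)) ≤ dv s) ∧
        (∀ i, i ≠ s → i ≠ t →
          (∑ h ∈ inN Adj i, ∑ j ∈ outN Adj i,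
            lpnorm (p i) ((∑ e ∈ ExtF i j, Ψ h i j e • e)
              - (∑ e ∈ ExtF h i, Φ h i j e • e))) ≤ dv i) ∧
        ((∑ h ∈ inN Adj t,
            lpnorm (p t) (z h t • xt - (∑ e ∈ ExtF h t, lam h t e • e))) ≤ dv t) ∧
        (∀ i j, Adj i j → (∑ e ∈ ExtF i j, lam i j e) = z i j) ∧
        (∀ i, i ≠ s → i ≠ t → ∀ h, Adj h i →
          (∑ j ∈ outN Adj i, ρ h i j) = z h i) ∧
        (∀ i, i ≠ s → i ≠ t → ∀ j, Adj i j →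
          (∑ h ∈ inN Adj i, ρ h i j) = z i j) ∧
        (∀ i, i ≠ s → i ≠ t → ∀ h j, Adj h i → Adj i j →
          (∑ e ∈ ExtF h i, Φ h i j e) = ρ h i j) ∧
        (∀ i, i ≠ s → i ≠ t → ∀ h, Adj h i → ∀ e ∈ ExtF h i,
          (∑ j ∈ outN Adj i, Φ h i j e) = lam h i e) ∧
        (∀ i, i ≠ s → i ≠ t → ∀ h j, Adj h i → Adj i j →
          (∑ e ∈ ExtF i j, Ψ h i j e) = ρ h i j) ∧
        (∀ i, i ≠ s → i ≠ t → ∀ j, Adj i j → ∀ e ∈ ExtF i j,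
          (∑ h ∈ inN Adj i, Ψ h i j e) = lam i j e) ∧
        r = ∑ i, ω i * dv i} := by
  exact Real.sInf_le_sInf_of_subset (sppF2Values_subset_sppF1Values hp)
    ⟨0, sppF1Values_nonneg fun i => (hω i).le⟩ (sppF2Values_nonempty hp hst)

/-- The optimal value of the continuous relaxation of formulation (SPP-F1) is at most
the optimal value of the continuous relaxation of formulation (SPP-F2). -/
theorem stmt_12 {d m : ℕ}
    (P : Fin m → Set (Fin d → ℝ))
    (Ext : Fin m → Finset (Fin d → ℝ))
    (hExt : ∀ i, (Ext i : Set (Fin d → ℝ)) = Set.extremePoints ℝ (P i))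
    (hP : ∀ i, P i = convexHull ℝ (Ext i : Set (Fin d → ℝ)))
    (hdisj : ∀ i j, i ≠ j → interior (P i) ∩ interior (P j) = ∅)
    (p : Fin m → ℝ≥0∞) (hp : ∀ i, 1 ≤ p i)
    (ω : Fin m → ℝ) (hω : ∀ i, 0 < ω i)
    (ExtF : Fin m → Fin m → Finset (Fin d → ℝ))
    (hExtF : ∀ i j, i ≠ j → (ExtF i j : Set (Fin d → ℝ)) = Set.extremePoints ℝ (P i ∩ P j))
    (hFpoly : ∀ i j, i ≠ j → P i ∩ P j = convexHull ℝ (ExtF i j : Set (Fin d → ℝ)))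
    (Adj : Fin m → Fin m → Prop)
    (hAdj : ∀ i j, Adj i j ↔ i ≠ j ∧ (P i ∩ P j).Nonempty)
    (s t : Fin m) (hst : s ≠ t)
    (xs xt : Fin d → ℝ) (hxs : xs ∈ P s) (hxt : xt ∈ P t) :
    sInf {r : ℝ | ∃ (dv : Fin m → ℝ) (z : Fin m → Fin m → ℝ)
        (lam : Fin m → Fin m → (Fin d → ℝ) → ℝ),
        (∀ i, 0 ≤ dv i) ∧
        (∀ i j, Adj i j → 0 ≤ z i j ∧ z i j ≤ 1) ∧
        (∀ i j, Adj i j → ∀ e ∈ ExtF i j, 0 ≤ lam i j e) ∧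
        ((∑ j ∈ outN Adj s, z s j) - (∑ h ∈ inN Adj s, z h s) = 1) ∧
        (∀ i, i ≠ s → i ≠ t →
          (∑ j ∈ outN Adj i, z i j) - (∑ h ∈ inN Adj i, z h i) = 0) ∧
        ((∑ j ∈ outN Adj t, z t j) - (∑ h ∈ inN Adj t, z h t) = -1) ∧
        (∀ i, (∑ h ∈ inN Adj i, z h i) ≤ 1) ∧
        (∀ i, (∑ j ∈ outN Adj i, z i j) ≤ 1) ∧
        (lpnorm (p s) ((∑ j ∈ outN Adj s, ∑ e ∈ ExtF s j, lam s j e • e) - xs) ≤ dv s) ∧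
        (∀ i, i ≠ s → i ≠ t →
          lpnorm (p i) ((∑ j ∈ outN Adj i, ∑ e ∈ ExtF i j, lam i j e • e)
            - (∑ h ∈ inN Adj i, ∑ e ∈ ExtF h i, lam h i e • e)) ≤ dv i) ∧
        (lpnorm (p t) (xt - (∑ h ∈ inN Adj t, ∑ e ∈ ExtF h t, lam h t e • e)) ≤ dv t) ∧
        (∀ i j, Adj i j → (∑ e ∈ ExtF i j, lam i j e) = z i j) ∧
        r = ∑ i, ω i * dv i}
    ≤ sInf {r : ℝ | ∃ (dv : Fin m → ℝ) (z : Fin m → Fin m → ℝ)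
        (lam : Fin m → Fin m → (Fin d → ℝ) → ℝ)
        (ρ : Fin m → Fin m → Fin m → ℝ)
        (Φ : Fin m → Fin m → Fin m → (Fin d → ℝ) → ℝ)
        (Ψ : Fin m → Fin m → Fin m → (Fin d → ℝ) → ℝ),
        (∀ i, 0 ≤ dv i) ∧
        (∀ i j, Adj i j → 0 ≤ z i j ∧ z i j ≤ 1) ∧
        (∀ i j, Adj i j → ∀ e ∈ ExtF i j, 0 ≤ lam i j e) ∧
        (∀ i, i ≠ s → i ≠ t → ∀ h j, Adj h i → Adj i j → 0 ≤ ρ h i j) ∧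
        (∀ i, i ≠ s → i ≠ t → ∀ h j, Adj h i → Adj i j →
          ∀ e ∈ ExtF h i, 0 ≤ Φ h i j e) ∧
        (∀ i, i ≠ s → i ≠ t → ∀ h j, Adj h i → Adj i j →
          ∀ e ∈ ExtF i j, 0 ≤ Ψ h i j e) ∧
        ((∑ j ∈ outN Adj s, z s j) - (∑ h ∈ inN Adj s, z h s) = 1) ∧
        (∀ i, i ≠ s → i ≠ t →
          (∑ j ∈ outN Adj i, z i j) - (∑ h ∈ inN Adj i, z h i) = 0) ∧
        ((∑ j ∈ outN Adj t, z t j) - (∑ h ∈ inN Adj t, z h t) = -1) ∧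
        (∀ i, (∑ h ∈ inN Adj i, z h i) ≤ 1) ∧
        (∀ i, (∑ j ∈ outN Adj i, z i j) ≤ 1) ∧
        ((∑ j ∈ outN Adj s,
            lpnorm (p s) ((∑ e ∈ ExtF s j, lam s j e • e) - z s j • xs)) ≤ dv s) ∧
        (∀ i, i ≠ s → i ≠ t →
          (∑ h ∈ inN Adj i, ∑ j ∈ outN Adj i,
            lpnorm (p i) ((∑ e ∈ ExtF i j, Ψ h i j e • e)
              - (∑ e ∈ ExtF h i, Φ h i j e • e))) ≤ dv i) ∧
        ((∑ h ∈ inN Adj t,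
            lpnorm (p t) (z h t • xt - (∑ e ∈ ExtF h t, lam h t e • e))) ≤ dv t) ∧
        (∀ i j, Adj i j → (∑ e ∈ ExtF i j, lam i j e) = z i j) ∧
        (∀ i, i ≠ s → i ≠ t → ∀ h, Adj h i →
          (∑ j ∈ outN Adj i, ρ h i j) = z h i) ∧
        (∀ i, i ≠ s → i ≠ t → ∀ j, Adj i j →
          (∑ h ∈ inN Adj i, ρ h i j) = z i j) ∧
        (∀ i, i ≠ s → i ≠ t → ∀ h j, Adj h i → Adj i j →
          (∑ e ∈ ExtF h i, Φ h i j e) = ρ h i j) ∧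
        (∀ i, i ≠ s → i ≠ t → ∀ h, Adj h i → ∀ e ∈ ExtF h i,
          (∑ j ∈ outN Adj i, Φ h i j e) = lam h i e) ∧
        (∀ i, i ≠ s → i ≠ t → ∀ h j, Adj h i → Adj i j →
          (∑ e ∈ ExtF i j, Ψ h i j e) = ρ h i j) ∧
        (∀ i, i ≠ s → i ≠ t → ∀ j, Adj i j → ∀ e ∈ ExtF i j,
          (∑ h ∈ inN Adj i, Ψ h i j e) = lam i j e) ∧
        r = ∑ i, ω i * dv i} :=
  stmt_12_general p hp ω hω ExtF Adj s t hst xs xt
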